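/- Let λ ∈ (1,2), p_λ(x) = x(λ² - x)(x² + (4/λ - λ²)x + 4/λ²), and φ(x) = (λ² - x)/(λx + 1). Then for all real x with λx + 1 ≠ 0, p_λ(φ(x))·(φ'(x))⁻² = p_λ(x), i.e., (φ'(x))² · p_λ(x) = p_λ(φ(x)). -/

import Mathlib

/-- The quartic p_λ(x) = x(λ² - x)(x² + (4/λ - λ²)x + 4/λ²). -/
noncomputable def pLam (l x : ℝ) : ℝ := x * (l^2 - x) * (x^2 + (4/l - l^2)*x + 4/l^2)

/-- The Möbius transformation φ(x) = (λ² - x)/(λx + 1). -/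
noncomputable def moebius (l x : ℝ) : ℝ := (l^2 - x)/(l*x + 1)

/-!
φ swaps the roots `0` and `λ²` of `p_λ` and maps the quadratic factor `q` of `p_λ` to a multiple of
itself: `(λ² - φ x) = (λ³ + 1) x / (λx + 1)` and `q(φ x) = (λ³ + 1) q(x) / (λx + 1)²`. Multiplying the
three factors gives `p_λ(φ x) = (λ³ + 1)² p_λ(x) / (λx + 1)⁴ = φ'(x)² p_λ(x)`.
-/

noncomputable def pLamQuadratic (l x : ℝ) : ℝ := x^2 + (4/l - l^2)*x + 4/l^2

theorem pLam_eq_mul_pLamQuadratic (l x : ℝ) : pLam l x = x * (l^2 - x) * pLamQuadratic l x := rfl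

theorem sq_sub_moebius {l x : ℝ} (hx : l*x + 1 ≠ 0) :
    l^2 - moebius l x = (l^3 + 1) * x / (l*x + 1) := by
  unfold moebius
  field_simp
  ring

theorem pLamQuadratic_moebius {l x : ℝ} (hl : l ≠ 0) (hx : l*x + 1 ≠ 0) :
    pLamQuadratic l (moebius l x) = (l^3 + 1) * pLamQuadratic l x / (l*x + 1)^2 := by
  unfold pLamQuadratic moebius
  field_simp
  ring

theorem pLam_moebius {l x : ℝ} (hl : l ≠ 0) (hx : l*x + 1 ≠ 0) :
    pLam l (moebius l x) = (l^3 + 1)^2 / (l*x + 1)^4 * pLam l x := by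
  rw [pLam_eq_mul_pLamQuadratic, sq_sub_moebius hx, pLamQuadratic_moebius hl hx,
    pLam_eq_mul_pLamQuadratic, moebius]
  field_simp

theorem stmt_14 (l : ℝ) (hl : l ∈ Set.Ioo (1:ℝ) 2) (x : ℝ) (hx : l*x + 1 ≠ 0) :
    (-(l^3 + 1)/(l*x + 1)^2)^2 * pLam l x = pLam l (moebius l x) := by
  rw [pLam_moebius (by linarith [hl.1]) hx, neg_div, neg_sq, div_pow, ← pow_mul]
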